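/- Let R_aa, R_uu be symmetric real matrices of sizes m×m and s×s, R_au an m×s real matrix, and D a symmetric positive definite m×m matrix. If the block matrix R = [[R_aa, R_au],[R_au^T, R_uu]] is positive semi-definite and 3D - R_aa is positive semi-definite, then the (not necessarily symmetric) 3×3 block matrix R_1 = [[R_aa + D, R_au, D],[R_au^T, R_uu, 0],[R_aa, R_au, D]] satisfies x^T R_1 x ≥ 0 for all vectors x ∈ ℝ^{m+s+m}. -/

import Mathlib

/-!
With `z = 2a + b`, four times the quadratic form of `R₁` at `(a, u, b)` splits as
`(z, 2u)ᵀ R (z, 2u) + zᵀ D z + bᵀ (3D - R_aa) b`, a sum of three nonnegative terms.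
-/

open Matrix

namespace Matrix

variable {m n R : Type*} [Fintype m] [Fintype n] [CommRing R]

lemma IsSymm.dotProduct_mulVec_comm {A : Matrix m m R} (hA : A.IsSymm) (x y : m → R) :
    x ⬝ᵥ A *ᵥ y = y ⬝ᵥ A *ᵥ x := by
  rw [← dotProduct_transpose_mulVec, hA.eq]

lemma four_mul_dotProduct_mulVec_fromBlocks_fromCols_fromRows
    {A D : Matrix m m R} (B : Matrix m n R) (C : Matrix n n R) (hA : A.IsSymm) (hD : D.IsSymm)
    (a b : m → R) (u : n → R) :
    4 * (Sum.elim a (Sum.elim u b) ⬝ᵥ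
        fromBlocks (A + D) (fromCols B D) (fromRows Bᵀ A) (fromBlocks C 0 B D) *ᵥ
          Sum.elim a (Sum.elim u b)) =
      Sum.elim (2 • a + b) (2 • u) ⬝ᵥ fromBlocks A B Bᵀ C *ᵥ Sum.elim (2 • a + b) (2 • u) +
        (2 • a + b) ⬝ᵥ D *ᵥ (2 • a + b) + b ⬝ᵥ ((3 : R) • D - A) *ᵥ b := by
  simp only [fromBlocks_mulVec, sumElim_dotProduct_sumElim, fromRows_mulVec,
    fromCols_mulVec_sumElim, mulVec_add, mulVec_smul, dotProduct_add, add_dotProduct,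
    smul_dotProduct, dotProduct_smul, add_mulVec, sub_mulVec, smul_mulVec, dotProduct_sub,
    zero_mulVec, add_zero, Sum.elim_comp_inl, Sum.elim_comp_inr, dotProduct_transpose_mulVec,
    smul_eq_mul, hA.dotProduct_mulVec_comm b a, hD.dotProduct_mulVec_comm b a]
  ring

end Matrix

theorem stmt_1 {m s : ℕ}
    (Raa D : Matrix (Fin m) (Fin m) ℝ) (Ruu : Matrix (Fin s) (Fin s) ℝ)
    (Rau : Matrix (Fin m) (Fin s) ℝ)
    (hRaa : Raa.IsSymm) (hDsymm : D.IsSymm) (hD : D.PosDef)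
    (hR : (Matrix.fromBlocks Raa Rau Rauᵀ Ruu).PosSemidef)
    (hbound : ((3 : ℝ) • D - Raa).PosSemidef) :
    ∀ x : (Fin m ⊕ (Fin s ⊕ Fin m)) → ℝ,
      0 ≤ x ⬝ᵥ (Matrix.fromBlocks (Raa + D) (Matrix.fromCols Rau D)
          (Matrix.fromRows Rauᵀ Raa) (Matrix.fromBlocks Ruu 0 Rau D)).mulVec x := by
  intro x
  obtain ⟨a, u, b, rfl⟩ : ∃ a u b, x = Sum.elim a (Sum.elim u b) :=
    ⟨x ∘ Sum.inl, x ∘ Sum.inr ∘ Sum.inl, x ∘ Sum.inr ∘ Sum.inr, by ext (i | i | i) <;> rfl⟩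
  have hsplit := four_mul_dotProduct_mulVec_fromBlocks_fromCols_fromRows Rau Ruu hRaa hDsymm a b u
  have hRz := hR.dotProduct_mulVec_nonneg (Sum.elim (2 • a + b) (2 • u))
  have hDz := hD.posSemidef.dotProduct_mulVec_nonneg (2 • a + b)
  have hb := hbound.dotProduct_mulVec_nonneg b
  simp only [star_trivial] at hRz hDz hb
  linarith
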